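/- The master relation holds: for every u ∈ ℂ, T_M(u) · (χ + u·𝕊·χ) = (χ − u·𝕊·χ) · T_M(u). -/

import Mathlib

/-!
Write `Q k` for the charges and `X = 𝕊 χ`. An independent set `S` meets the right-end clique `K`
at most once, so `χ h_S = ± h_S χ` according to whether `S` meets `K`. The heart of the proof is
`Q (k+1) χ - χ Q (k+1) = Q k X + X Q k`. Expanding the right side over the pairs `(S, v)` with
`S` independent of size `k` and `v ∈ K`, and using that `K` is simplicial (the neighbours of a
vertex of `K` outside `K` are pairwise adjacent), each term either vanishes, or equals
`2 h_{S ∪ {v}}` (when `S` misses `K` and `v` has no neighbour in `S`), or cancels against the term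
of `(S - w + v, w)`, where `S ∩ K = {w}`. Weighted by `(-u)^k`, these identities telescope to the
master relation.
-/

namespace FFD

variable {A : Type*} [Ring A] [Algebra ℂ A]

/-- Index pattern for which the extra generator `ħ_{2m+1}` (with parameter `m`)
anticommutes with the plain generator `h l`. -/
def MixedRel (m l : ℤ) : Prop :=
  l = 2 * m - 5 ∨ l = 2 * m - 3 ∨ l = 2 * m - 1 ∨ l = 2 * m + 1 ∨ l = 2 * m ∨ l = 2 * m + 2

/-- Vertex codes of the frustration graph: the even code `2 * i` encodes the plain vertex `i`
(generator `h i`), the odd code `2 * m + 1` encodes the barred vertex `2m+1` (generator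
`ħ_{2m+1}`).  Two codes are adjacent exactly when the corresponding generators anticommute. -/
def Adj (v w : ℕ) : Prop :=
  if v % 2 = 0 then
    if w % 2 = 0 then
      1 ≤ |((v / 2 : ℕ) : ℤ) - ((w / 2 : ℕ) : ℤ)| ∧
        |((v / 2 : ℕ) : ℤ) - ((w / 2 : ℕ) : ℤ)| ≤ 2
    else MixedRel ((w / 2 : ℕ) : ℤ) ((v / 2 : ℕ) : ℤ)
  else
    if w % 2 = 0 then MixedRel ((v / 2 : ℕ) : ℤ) ((w / 2 : ℕ) : ℤ)
    else |((v / 2 : ℕ) : ℤ) - ((w / 2 : ℕ) : ℤ)| = 1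

/-- The vertex set of the frustration graph `G n`: plain vertices `1, …, n` and barred
vertices `2m+1` for `0 ≤ m ≤ ⌊n/2⌋`. -/
def memG (n v : ℕ) : Prop :=
  if v % 2 = 0 then 1 ≤ v / 2 ∧ v / 2 ≤ n else v / 2 ≤ n / 2

/-- The generator attached to a vertex code. -/
def gen (h hb : ℤ → A) (v : ℕ) : A :=
  if v % 2 = 0 then h ((v / 2 : ℕ) : ℤ) else hb ((v / 2 : ℕ) : ℤ)

/-- The product `h_S` of the generators of a set of vertex codes, taken in increasing order
of the codes (for an independent set the factors pairwise commute, so the order is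
immaterial). -/
def prodGen (h hb : ℤ → A) (S : Finset ℕ) : A :=
  ((S.sort (· ≤ ·)).map (gen h hb)).prod

/-- The finite collection of all independent sets of cardinality `k` of `G n`. -/
noncomputable def indepSets (n k : ℕ) : Finset (Finset ℕ) :=
  @Finset.filter _
    (fun S => S.card = k ∧ (∀ v ∈ S, memG n v) ∧ ∀ v ∈ S, ∀ w ∈ S, v ≠ w → ¬Adj v w)
    (fun _ => Classical.propDecidable _)
    (Finset.range (2 * n + 2)).powerset

/-- The charge `Q_n^{(k)}`, with the conventions `Q_n^{(0)} = 1`, `Q_n^{(k)} = 0` for `k < 0`,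
and `Q_n^{(k)} = 0` for `n < 0`, `k > 0`. -/
noncomputable def Q (h hb : ℤ → A) (n k : ℤ) : A :=
  if k < 0 then 0
  else if n < 0 then (if k = 0 then 1 else 0)
  else ∑ S ∈ indepSets n.toNat k.toNat, prodGen h hb S

/-- The transfer matrix `T_n(u) = ∑_{k ≥ 0} (-u)^k Q_n^{(k)}` (a finite sum, since
`Q_n^{(k)} = 0` whenever `k` exceeds the number of vertices of `G n`), with `T_n(u) = 1`
for `n ≤ 0`. -/
noncomputable def T (h hb : ℤ → A) (n : ℤ) (u : ℂ) : A :=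
  if n ≤ 0 then 1
  else ∑ k ∈ Finset.range (2 * n.toNat + 3), (-u) ^ k • Q h hb n (k : ℤ)

/-- `A_{2m-1} = h_{2m} h_{2m-3} + h_{2m-2} ħ_{2m+1}`. -/
def AOp (h hb : ℤ → A) (m : ℤ) : A :=
  h (2 * m) * h (2 * m - 3) + h (2 * m - 2) * hb m

/-- `C_{2m} = h_{2m-3} ħ_{2m+3}`. -/
def COp (h hb : ℤ → A) (m : ℤ) : A := h (2 * m - 3) * hb (m + 1)

/-- `𝕊_{2m} = h_{2m-1} + h_{2m} + ħ_{2m+1}`. -/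
def SOp (h hb : ℤ → A) (m : ℤ) : A := h (2 * m - 1) + h (2 * m) + hb m

/-- The defining relations of the extended FFD algebra with generators `h_1, …, h_M` and
`ħ_{2m+1} = hb m` for `0 ≤ m ≤ ⌊M/2⌋`. -/
structure FFDHyp (M : ℤ) (h hb : ℤ → A) (b bb : ℤ → ℂ) : Prop where
  hsq : ∀ m, 1 ≤ m → m ≤ M → h m * h m = (b m) ^ 2 • (1 : A)
  hanti : ∀ m l, 1 ≤ m → m ≤ M → 1 ≤ l → l ≤ M → 1 ≤ |m - l| → |m - l| ≤ 2 →
    h m * h l = -(h l * h m)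
  hcomm : ∀ m l, 1 ≤ m → m ≤ M → 1 ≤ l → l ≤ M → 2 < |m - l| →
    h m * h l = h l * h m
  hbsq : ∀ m, 0 ≤ m → m ≤ M / 2 → hb m * hb m = (bb m) ^ 2 • (1 : A)
  hbanti : ∀ m l, 0 ≤ m → m ≤ M / 2 → 1 ≤ l → l ≤ M → MixedRel m l →
    hb m * h l = -(h l * hb m)
  hbcomm : ∀ m l, 0 ≤ m → m ≤ M / 2 → 1 ≤ l → l ≤ M → ¬MixedRel m l →
    hb m * h l = h l * hb m
  hbbanti : ∀ m m', 0 ≤ m → m ≤ M / 2 → 0 ≤ m' → m' ≤ M / 2 → |m - m'| = 1 →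
    hb m * hb m' = -(hb m' * hb m)
  hbbcomm : ∀ m m', 0 ≤ m → m ≤ M / 2 → 0 ≤ m' → m' ≤ M / 2 → m ≠ m' → |m - m'| ≠ 1 →
    hb m * hb m' = hb m' * hb m

/-- The extra relation `A_{2m-1} C_{2m+2} = C_{2m} A_{2m+3}` for all `1 < m < ⌊M/2⌋ - 1`. -/
def ACRel (M : ℤ) (h hb : ℤ → A) : Prop :=
  ∀ m : ℤ, 1 < m → m < M / 2 - 1 →
    AOp h hb m * COp h hb (m + 1) = COp h hb m * AOp h hb (m + 2)

/-- The assumption that the products around the even holes are the scalars `μ_{2m-1}`. -/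
def MuScalar (M : ℤ) (h hb : ℤ → A) (μ : ℤ → ℂ) : Prop :=
  ∀ m : ℤ, 1 < m → m ≤ M / 2 →
    h (2 * m - 3) * h (2 * m) * h (2 * m - 2) * hb m = μ m • (1 : A)

/-- The assumption that `𝕊_{2m}²`, `A_{2m-1}²`, `C_{2m}²` are the scalars `s_{2m}`,
`a_{2m-1}`, `c_{2m}` times the identity, the coefficients attached to generators of
non-positive index being set to zero. -/
structure ScalarSquares (M : ℤ) (h hb : ℤ → A) (s a c : ℤ → ℂ) : Prop where
  hs : ∀ m : ℤ, 1 ≤ m → 2 * m ≤ M → SOp h hb m * SOp h hb m = s (2 * m) • (1 : A)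
  hszero : ∀ m : ℤ, m ≤ 0 → s (2 * m) = 0
  ha : ∀ m : ℤ, 2 ≤ m → 2 * m ≤ M → AOp h hb m * AOp h hb m = a (2 * m - 1) • (1 : A)
  hazero : ∀ m : ℤ, m ≤ 1 → a (2 * m - 1) = 0
  hc : ∀ m : ℤ, 2 ≤ m → 2 * m + 2 ≤ M → COp h hb m * COp h hb m = c (2 * m) • (1 : A)
  hczero : ∀ m : ℤ, m ≤ 1 → c (2 * m) = 0

/-- The explicitly defined polynomial sequence `P_n(z)`:
`P_n = 1` for `n ≤ 0`, `P_{2m-1}(z) = P_{2m-2}(z) - b_{2m-1}² z P_{2m-4}(z)` and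
`P_{2m}(z) = P_{2m-2}(z) - s_{2m} z P_{2m-4}(z) + a_{2m-1} z² P_{2m-6}(z)
- c_{2m-2} z² P_{2m-8}(z)`. -/
structure PolyRec (b s a c : ℤ → ℂ) (P : ℤ → ℂ → ℂ) : Prop where
  base : ∀ n : ℤ, n ≤ 0 → ∀ z : ℂ, P n z = 1
  odd : ∀ m : ℤ, 1 ≤ m → ∀ z : ℂ, P (2 * m - 1) z =
    P (2 * m - 2) z - (b (2 * m - 1)) ^ 2 * z * P (2 * m - 4) z
  even : ∀ m : ℤ, 1 ≤ m → ∀ z : ℂ, P (2 * m) z =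
    P (2 * m - 2) z - s (2 * m) * z * P (2 * m - 4) z
      + a (2 * m - 1) * z ^ 2 * P (2 * m - 6) z
      - c (2 * m - 2) * z ^ 2 * P (2 * m - 8) z

/-- `r_M`: equal to `1` for odd `M` and to `2` for even `M`. -/
def rM (M : ℤ) : ℤ := if M % 2 = 1 then 1 else 2

/-- The sum `𝕊` of the generators of the right-end simplicial clique:
`h_M` for odd `M`, and `h_{M-1} + h_M + ħ_{M+1}` for even `M`. -/
def SEdge (M : ℤ) (h hb : ℤ → A) : A :=
  if M % 2 = 1 then h M else h (M - 1) + h M + hb (M / 2)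

/-- The right-end simplicial mode `χ`: it squares to `1`, anticommutes with the generators
of the right-end simplicial clique and commutes with all the other generators. -/
structure EdgeMode (M : ℤ) (h hb : ℤ → A) (χ : A) : Prop where
  sq : χ * χ = 1
  odd : M % 2 = 1 →
    (χ * h M = -(h M * χ)) ∧
    (∀ l : ℤ, 1 ≤ l → l < M → χ * h l = h l * χ) ∧
    (∀ m : ℤ, 0 ≤ m → m ≤ M / 2 → χ * hb m = hb m * χ)
  even : M % 2 = 0 →
    (χ * h (M - 1) = -(h (M - 1) * χ)) ∧
    (χ * h M = -(h M * χ)) ∧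
    (χ * hb (M / 2) = -(hb (M / 2) * χ)) ∧
    (∀ l : ℤ, 1 ≤ l → l ≤ M - 2 → χ * h l = h l * χ) ∧
    (∀ m : ℤ, 0 ≤ m → m < M / 2 → χ * hb m = hb m * χ)

open Finset

section SignedCommutation

variable {R : Type*} [Ring R]

def sortedProd (g : ℕ → R) (S : Finset ℕ) : R := ((S.sort (· ≤ ·)).map g).prod

@[simp]
lemma sortedProd_empty (g : ℕ → R) : sortedProd g ∅ = 1 := by
  simp [sortedProd]

lemma sortedProd_insert {g : ℕ → R} {S : Finset ℕ} {v : ℕ} (hv : v ∉ S)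
    (hcomm : (↑(insert v S) : Set ℕ).Pairwise fun w w' => Commute (g w) (g w')) :
    sortedProd g (insert v S) = g v * sortedProd g S := by
  have hperm : ((insert v S).sort (· ≤ ·)).Perm (v :: S.sort (· ≤ ·)) :=
    (sort_perm_toList _ _).trans <| (toList_insert hv).trans <|
      .cons _ (sort_perm_toList _ _).symm
  have hpair : (((insert v S).sort (· ≤ ·)).map g).Pairwise Commute := by
    refine List.pairwise_map.2 <| List.Pairwise.imp_of_mem ?_ (sort_nodup _ _)
    intro a b ha hb hab
    exact hcomm (by simpa using ha) (by simpa using hb) hab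
  simpa [sortedProd] using (hperm.map g).prod_eq' hpair

lemma mul_sortedProd_eq_neg_one_pow_smul {g : ℕ → R} (x : R) (B : ℕ → Prop)
    [DecidablePred B] {S : Finset ℕ}
    (hcomm : (S : Set ℕ).Pairwise fun w w' => Commute (g w) (g w'))
    (hanti : ∀ w ∈ S, B w → x * g w = -(g w * x))
    (hcommute : ∀ w ∈ S, ¬B w → Commute x (g w)) :
    x * sortedProd g S = (-1 : ℤ) ^ #{w ∈ S | B w} • (sortedProd g S * x) := by
  induction S using Finset.induction_on with
  | empty => simp
  | @insert v S hvS ih =>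
    rw [sortedProd_insert hvS hcomm, ← mul_assoc, filter_insert]
    have ih' := ih (hcomm.mono (by simp)) (fun w hw => hanti w (by simp [hw]))
      (fun w hw => hcommute w (by simp [hw]))
    by_cases hB : B v
    · rw [hanti v (by simp) hB, if_pos hB, card_insert_of_notMem (by simp [hvS]),
        pow_succ, mul_comm, ← smul_smul, neg_mul, mul_assoc, ih', mul_smul_comm, ← mul_assoc]
      simp
    · rw [(hcommute v (by simp) hB).eq, if_neg hB, mul_assoc, ih', mul_smul_comm, mul_assoc]

end SignedCommutation

/-- The difference of the two sides telescopes, its `k`-th term being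
`(-u) ^ k • (Q k χ - χ Q k) - (-u) ^ (k + 1) • (Q (k + 1) χ - χ Q (k + 1))`. -/
lemma sum_pow_smul_mul_add_smul {𝕜 R : Type*} [CommRing 𝕜] [Ring R] [Algebra 𝕜 R]
    {Q : ℕ → R} {χ X : R} {N : ℕ} (h0 : Q 0 = 1) (hN : Q N = 0)
    (hQ : ∀ k, Q (k + 1) * χ - χ * Q (k + 1) = Q k * X + X * Q k) (u : 𝕜) :
    (∑ k ∈ range N, (-u) ^ k • Q k) * (χ + u • X)
      = (χ - u • X) * ∑ k ∈ range N, (-u) ^ k • Q k := by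
  set f : ℕ → R := fun k => (-u) ^ k • (Q k * χ - χ * Q k)
  have hstep : ∀ k, (-u) ^ k • Q k * (χ + u • X) - (χ - u • X) * ((-u) ^ k • Q k)
      = f k - f (k + 1) := fun k => by
    simp only [f]
    rw [hQ]
    simp only [mul_add, sub_mul, smul_mul_assoc, mul_smul_comm, smul_smul, pow_succ]
    module
  rw [← sub_eq_zero, sum_mul, mul_sum, ← sum_sub_distrib]
  simp only [hstep, sum_range_sub', f, h0, hN]
  simp

section SimplicialMode

lemma card_inter_le_one_of_isIndepSet {α : Type*} [DecidableEq α] {G : SimpleGraph α}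
    {S K : Finset α} (hS : G.IsIndepSet (S : Set α)) (hK : G.IsClique (K : Set α)) :
    #(S ∩ K) ≤ 1 := by
  refine card_le_one.2 fun v hv w hw => by_contra fun hne => ?_
  simp only [mem_inter] at hv hw
  exact hS hv.1 hw.1 hne (hK hv.2 hw.2 hne)

lemma isIndepSet_insert_of_forall_not_adj {α : Type*} [DecidableEq α] {G : SimpleGraph α}
    {S : Finset α} {v : α} (hS : G.IsIndepSet (S : Set α)) (hv : ∀ w ∈ S, ¬G.Adj v w) :
    G.IsIndepSet (↑(insert v S) : Set α) := by
  rw [coe_insert]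
  exact hS.insert fun w hw _ => ⟨hv w hw, fun h => hv w hw h.symm⟩

lemma min'_eq_of_eq_singleton {α : Type*} [LinearOrder α] {s : Finset α} {a : α}
    (h : s = {a}) (hs : s.Nonempty) : s.min' hs = a := by
  subst h
  exact min'_singleton a

def indepFinsets (G : SimpleGraph ℕ) [DecidableRel G.Adj] (V : Finset ℕ) (k : ℕ) :
    Finset (Finset ℕ) :=
  {S ∈ V.powersetCard k | G.IsIndepSet (S : Set ℕ)}

variable {R : Type*} [Ring R]

def charge (G : SimpleGraph ℕ) [DecidableRel G.Adj] (V : Finset ℕ) (g : ℕ → R) (k : ℕ) :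
    R :=
  ∑ S ∈ indepFinsets G V k, sortedProd g S

section IndepFinsets

variable {G : SimpleGraph ℕ} [DecidableRel G.Adj] {V S : Finset ℕ} {k : ℕ}

lemma mem_indepFinsets :
    S ∈ indepFinsets G V k ↔ #S = k ∧ S ⊆ V ∧ G.IsIndepSet (S : Set ℕ) := by
  rw [indepFinsets, mem_filter, mem_powersetCard, and_comm (a := S ⊆ V), and_assoc]

lemma charge_zero (g : ℕ → R) : charge G V g 0 = 1 := by
  have : indepFinsets G V 0 = {∅} := by
    ext S
    rw [mem_indepFinsets, mem_singleton, card_eq_zero, and_iff_left_iff_imp]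
    rintro rfl
    simp
  simp [charge, this]

lemma charge_eq_zero (g : ℕ → R) (hk : #V < k) : charge G V g k = 0 := by
  simp [charge, indepFinsets, powersetCard_eq_empty.2 hk]

end IndepFinsets

structure IsSimplicialMode (G : SimpleGraph ℕ) (g : ℕ → R) (V K : Finset ℕ) (χ : R) :
    Prop where
  anticomm : ∀ v ∈ V, ∀ w ∈ V, G.Adj v w → g v * g w = -(g w * g v)
  commute : ∀ v ∈ V, ∀ w ∈ V, ¬G.Adj v w → Commute (g v) (g w)
  subset : K ⊆ V
  isClique : G.IsClique (K : Set ℕ)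
  simplicial : ∀ v ∈ K, G.IsClique {w | w ∈ V ∧ w ∉ K ∧ G.Adj v w}
  anticomm_mode : ∀ v ∈ K, χ * g v = -(g v * χ)
  commute_mode : ∀ v ∈ V, v ∉ K → Commute χ (g v)

abbrev IsAddable (G : SimpleGraph ℕ) (K S : Finset ℕ) (v : ℕ) : Prop :=
  v ∉ S ∧ ∀ w ∈ S, G.Adj v w → w ∈ K

namespace IsSimplicialMode

variable {G : SimpleGraph ℕ} {g : ℕ → R} {V K S : Finset ℕ} {χ : R} {v w : ℕ}

lemma pairwise_commute (hχ : IsSimplicialMode G g V K χ) (hSV : S ⊆ V)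
    (hS : G.IsIndepSet (S : Set ℕ)) :
    (S : Set ℕ).Pairwise fun w w' => Commute (g w) (g w') :=
  fun w hw w' hw' hne => hχ.commute w (hSV hw) w' (hSV hw') (hS hw hw' hne)

lemma sortedProd_insert (hχ : IsSimplicialMode G g V K χ) (hSV : insert v S ⊆ V)
    (hS : G.IsIndepSet (↑(insert v S) : Set ℕ)) (hv : v ∉ S) :
    sortedProd g (insert v S) = g v * sortedProd g S :=
  FFD.sortedProd_insert hv (hχ.pairwise_commute hSV hS)

lemma commute_sortedProd (hχ : IsSimplicialMode G g V K χ) (hv : v ∈ V) (hSV : S ⊆ V)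
    (hvS : ∀ w ∈ S, ¬G.Adj v w) : Commute (g v) (sortedProd g S) :=
  Commute.list_prod_right _ _ fun _ hx => by
    obtain ⟨w, hw, rfl⟩ := List.mem_map.1 hx
    rw [mem_sort] at hw
    exact hχ.commute v hv w (hSV hw) (hvS w hw)

lemma mode_mul_sortedProd (hχ : IsSimplicialMode G g V K χ) (hSV : S ⊆ V)
    (hS : G.IsIndepSet (S : Set ℕ)) :
    χ * sortedProd g S = (-1 : ℤ) ^ #(S ∩ K) • (sortedProd g S * χ) := by
  rw [← filter_mem_eq_inter]
  exact mul_sortedProd_eq_neg_one_pow_smul χ (· ∈ K) (hχ.pairwise_commute hSV hS)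
    (fun w _ hw => hχ.anticomm_mode w hw) (fun w hw hwK => hχ.commute_mode w (hSV hw) hwK)

lemma apply_mul_sortedProd [DecidableRel G.Adj] (hχ : IsSimplicialMode G g V K χ) (hv : v ∈ V)
    (hSV : S ⊆ V) (hS : G.IsIndepSet (S : Set ℕ)) :
    g v * sortedProd g S = (-1 : ℤ) ^ #{w ∈ S | G.Adj v w} • (sortedProd g S * g v) :=
  mul_sortedProd_eq_neg_one_pow_smul (g v) (G.Adj v) (hχ.pairwise_commute hSV hS)
    (fun w hw => hχ.anticomm v hv w (hSV hw))
    (fun w hw => hχ.commute v hv w (hSV hw))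

/-- As `K` is a clique, `v ∈ K \ S` is adjacent to every vertex of `S ∩ K`; as `K` is simplicial
and `S` independent, it is adjacent to at most one vertex of `S \ K`. -/
lemma card_filter_adj [DecidableRel G.Adj] (hχ : IsSimplicialMode G g V K χ) (hv : v ∈ K)
    (hvS : v ∉ S) (hSV : S ⊆ V) (hS : G.IsIndepSet (S : Set ℕ)) :
    #{w ∈ S | G.Adj v w} = #(S ∩ K) + #{w ∈ S | G.Adj v w ∧ w ∉ K} ∧
      #{w ∈ S | G.Adj v w ∧ w ∉ K} ≤ 1 := by
  constructor
  · rw [← filter_mem_eq_inter, ← card_union_of_disjoint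
      (disjoint_filter.2 fun w _ hwK h => h.2 hwK)]
    congr 1
    ext w
    simp only [mem_filter, mem_union]
    constructor
    · rintro ⟨hwS, hadj⟩
      by_cases hwK : w ∈ K
      exacts [Or.inl ⟨hwS, hwK⟩, Or.inr ⟨hwS, hadj, hwK⟩]
    · rintro (⟨hwS, hwK⟩ | ⟨hwS, hadj, -⟩)
      exacts [⟨hwS, hχ.isClique hv hwK (fun h => hvS (h ▸ hwS))⟩, ⟨hwS, hadj⟩]
  · refine card_le_one.2 fun w hw w' hw' => by_contra fun hne => ?_
    simp only [mem_filter] at hw hw'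
    exact hS hw.1 hw'.1 hne <| hχ.simplicial v hv ⟨hSV hw.1, hw.2.2, hw.2.1⟩
      ⟨hSV hw'.1, hw'.2.2, hw'.2.1⟩ hne

lemma inter_eq_singleton (hχ : IsSimplicialMode G g V K χ) (hS : G.IsIndepSet (S : Set ℕ))
    (hw : w ∈ S ∩ K) : S ∩ K = {w} :=
  (eq_singleton_iff_unique_mem.2 ⟨hw, fun _ hz =>
    card_le_one.1 (card_inter_le_one_of_isIndepSet hS hχ.isClique) _ hz _ hw⟩)

lemma sortedProd_mul_sub_mul_sortedProd (hχ : IsSimplicialMode G g V K χ) (hSV : S ⊆ V)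
    (hS : G.IsIndepSet (S : Set ℕ)) :
    sortedProd g S * χ - χ * sortedProd g S
      = if (S ∩ K).Nonempty then sortedProd g S * χ + sortedProd g S * χ else 0 := by
  rw [hχ.mode_mul_sortedProd hSV hS]
  rcases Nat.le_one_iff_eq_zero_or_eq_one.1 (card_inter_le_one_of_isIndepSet hS hχ.isClique)
    with h | h
  · rw [h, if_neg (by simpa [← not_nonempty_iff_eq_empty] using h), pow_zero, one_smul, sub_self]
  · rw [h, if_pos (card_pos.1 (by omega)), pow_one, neg_one_smul, sub_neg_eq_add]

lemma sortedProd_mul_add_neg_one_pow_smul [DecidableRel G.Adj]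
    (hχ : IsSimplicialMode G g V K χ) (hv : v ∈ K) (hSV : S ⊆ V)
    (hS : G.IsIndepSet (S : Set ℕ)) :
    sortedProd g S * g v + (-1 : ℤ) ^ #(S ∩ K) • (g v * sortedProd g S)
      = if IsAddable G K S v then sortedProd g S * g v + sortedProd g S * g v else 0 := by
  by_cases hvS : v ∈ S
  · have hcomm := hχ.commute_sortedProd (hχ.subset hv) hSV fun w hw hadj =>
      hS hvS hw (G.ne_of_adj hadj) hadj
    have hcard : #(S ∩ K) = 1 :=
      le_antisymm (card_inter_le_one_of_isIndepSet hS hχ.isClique)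
        (card_pos.2 ⟨v, mem_inter.2 ⟨hvS, hv⟩⟩)
    rw [if_neg fun h => h.1 hvS, hcard, pow_one, neg_one_smul, hcomm.eq, add_neg_cancel]
  · obtain ⟨hcard, hle⟩ := hχ.card_filter_adj hv hvS hSV hS
    -- the total sign is `(-1) ^ (2 * #(S ∩ K) + #{w ∈ S | G.Adj v w ∧ w ∉ K})`
    rw [hχ.apply_mul_sortedProd (hχ.subset hv) hSV hS, smul_smul, ← pow_add, hcard,
      ← add_assoc, ← two_mul, pow_add, pow_mul, neg_one_sq, one_pow, one_mul]
    have haddable : IsAddable G K S v ↔ #{w ∈ S | G.Adj v w ∧ w ∉ K} = 0 := by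
      simp only [card_eq_zero, filter_eq_empty_iff, not_and, not_not, IsAddable, hvS,
        not_false_eq_true, true_and]
    rcases Nat.le_one_iff_eq_zero_or_eq_one.1 hle with h | h
    · rw [if_pos (haddable.2 h), h, pow_zero, one_smul]
    · rw [if_neg (by rw [haddable, h]; exact one_ne_zero), h, pow_one, neg_one_smul,
        add_neg_cancel]

lemma not_adj_of_mem_erase (hχ : IsSimplicialMode G g V K χ) (hS : G.IsIndepSet (S : Set ℕ))
    (hadd : IsAddable G K S v) (hw : w ∈ S ∩ K) : ∀ z ∈ S.erase w, ¬G.Adj v z :=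
  fun z hz hadj => by
    have hzK : z ∈ S ∩ K :=
      mem_inter.2 ⟨mem_of_mem_erase hz, hadd.2 z (mem_of_mem_erase hz) hadj⟩
    rw [hχ.inter_eq_singleton hS hw, mem_singleton] at hzK
    exact ne_of_mem_erase hz hzK

lemma isIndepSet_insert_erase (hχ : IsSimplicialMode G g V K χ)
    (hS : G.IsIndepSet (S : Set ℕ)) (hadd : IsAddable G K S v) (hw : w ∈ S ∩ K) :
    G.IsIndepSet (↑(insert v (S.erase w)) : Set ℕ) :=
  isIndepSet_insert_of_forall_not_adj (hS.mono (coe_subset.2 (erase_subset w S)))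
    (hχ.not_adj_of_mem_erase hS hadd hw)

lemma isAddable_insert_erase (hS : G.IsIndepSet (S : Set ℕ)) (hv : v ∈ K)
    (hadd : IsAddable G K S v) (hw : w ∈ S ∩ K) : IsAddable G K (insert v (S.erase w)) w := by
  have hwv : w ≠ v := fun h => hadd.1 (h ▸ (mem_inter.1 hw).1)
  refine ⟨by simp [hwv], fun z hz hadj => ?_⟩
  rcases mem_insert.1 hz with rfl | hz
  · exact hv
  · exact absurd hadj (hS (mem_inter.1 hw).1 (mem_of_mem_erase hz) (ne_of_mem_erase hz).symm)

/-- Exchanging the two vertices `v, w` of `K` changes the sign, since `g v` and `g w` anticommute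
and both commute with the remaining factors. -/
lemma sortedProd_insert_erase_mul (hχ : IsSimplicialMode G g V K χ) (hSV : S ⊆ V)
    (hS : G.IsIndepSet (S : Set ℕ)) (hv : v ∈ K) (hadd : IsAddable G K S v)
    (hw : w ∈ S ∩ K) :
    sortedProd g (insert v (S.erase w)) * g w = -(sortedProd g S * g v) := by
  obtain ⟨hwS, hwK⟩ := mem_inter.1 hw
  have hUV : S.erase w ⊆ V := (erase_subset w S).trans hSV
  have hvU := hχ.commute_sortedProd (hχ.subset hv) hUV (hχ.not_adj_of_mem_erase hS hadd hw)
  have hwU := hχ.commute_sortedProd (hχ.subset hwK) hUV fun z hz =>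
    hS hwS (mem_of_mem_erase hz) (ne_of_mem_erase hz).symm
  have hvw := hχ.anticomm v (hχ.subset hv) w (hχ.subset hwK)
    (hχ.isClique hv hwK fun h => hadd.1 (h ▸ hwS))
  conv_rhs => rw [← insert_erase hwS]
  rw [hχ.sortedProd_insert (insert_subset (hχ.subset hv) hUV)
      (hχ.isIndepSet_insert_erase hS hadd hw) (fun h => hadd.1 (mem_of_mem_erase h)),
    hχ.sortedProd_insert (by rwa [insert_erase hwS]) (by rwa [insert_erase hwS])
      (notMem_erase w S),
    mul_assoc, mul_assoc, ← hwU.eq, ← hvU.eq, ← mul_assoc, ← mul_assoc, hvw, neg_mul]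

/-- The pairs `(S, v)` with `S ∩ K = {w}` cancel in pairs under `(S, v) ↦ (S - w + v, w)`. -/
lemma sum_addable_of_nonempty_eq_zero [DecidableRel G.Adj] (hχ : IsSimplicialMode G g V K χ)
    (k : ℕ) :
    ∑ x ∈ indepFinsets G V k ×ˢ K with IsAddable G K x.1 x.2 ∧ (x.1 ∩ K).Nonempty,
      sortedProd g x.1 * g x.2 = 0 := by
  refine sum_involution
    (fun x hx => (insert x.2 (x.1.erase ((x.1 ∩ K).min' (mem_filter.1 hx).2.2)),
      (x.1 ∩ K).min' (mem_filter.1 hx).2.2)) ?_ ?_ ?_ ?_ <;>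
  rintro ⟨S, v⟩ hx <;>
  obtain ⟨⟨hSk, hv⟩, hadd, hne⟩ := (by simpa only [mem_filter, mem_product] using hx) <;>
  obtain ⟨hcard, hSV, hS⟩ := mem_indepFinsets.1 hSk <;>
  obtain ⟨w, hw⟩ := id hne <;>
  obtain ⟨hwS, hwK⟩ := mem_inter.1 hw <;>
  simp only [min'_eq_of_eq_singleton (hχ.inter_eq_singleton hS hw)]
  · rw [hχ.sortedProd_insert_erase_mul hSV hS hv hadd hw, add_neg_cancel]
  · intro _ h
    rw [Prod.mk.injEq] at h
    exact hadd.1 (h.2 ▸ hwS)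
  · have hvE : v ∉ S.erase w := fun h => hadd.1 (mem_of_mem_erase h)
    have hcard' : #(insert v (S.erase w)) = k := by
      have : 0 < #S := card_pos.2 ⟨w, hwS⟩
      rw [card_insert_of_notMem hvE, card_erase_of_mem hwS]
      omega
    exact mem_filter.2 ⟨mem_product.2 ⟨mem_indepFinsets.2 ⟨hcard',
      insert_subset (hχ.subset hv) ((erase_subset w S).trans hSV),
      hχ.isIndepSet_insert_erase hS hadd hw⟩, hwK⟩,
      isAddable_insert_erase hS hv hadd hw, v, mem_inter.2 ⟨mem_insert_self v _, hv⟩⟩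
  · have hvE : v ∉ S.erase w := fun h => hadd.1 (mem_of_mem_erase h)
    have hinter := hχ.inter_eq_singleton (hχ.isIndepSet_insert_erase hS hadd hw)
      (mem_inter.2 ⟨mem_insert_self v _, hv⟩)
    simp only [min'_eq_of_eq_singleton hinter, erase_insert hvE, insert_erase hwS]

/-- `(S, v) ↦ insert v S` is a bijection onto the independent sets meeting `K` in one vertex. -/
lemma sum_addable_of_not_nonempty [DecidableRel G.Adj] (hχ : IsSimplicialMode G g V K χ)
    (k : ℕ) :
    ∑ x ∈ indepFinsets G V k ×ˢ K with IsAddable G K x.1 x.2 ∧ ¬(x.1 ∩ K).Nonempty,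
        sortedProd g x.1 * g x.2
      = ∑ T ∈ indepFinsets G V (k + 1) with (T ∩ K).Nonempty, sortedProd g T := by
  have hfacts : ∀ S v, (S, v) ∈ {x ∈ indepFinsets G V k ×ˢ K |
      IsAddable G K x.1 x.2 ∧ ¬(x.1 ∩ K).Nonempty} →
      (#S = k ∧ S ⊆ V ∧ G.IsIndepSet (S : Set ℕ)) ∧ v ∈ K ∧ v ∉ S ∧
        ∀ z ∈ S, ¬G.Adj v z := by
    intro S v hx
    simp only [mem_filter, mem_product, mem_indepFinsets] at hx
    obtain ⟨⟨hS, hv⟩, hadd, hne⟩ := hx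
    exact ⟨hS, hv, hadd.1, fun z hz hadj => hne ⟨z, mem_inter.2 ⟨hz, hadd.2 z hz hadj⟩⟩⟩
  refine sum_bij (fun x _ => insert x.2 x.1) ?_ ?_ ?_ ?_
  · rintro ⟨S, v⟩ hx
    obtain ⟨⟨hcard, hSV, hS⟩, hv, hvS, hnadj⟩ := hfacts S v hx
    exact mem_filter.2 ⟨mem_indepFinsets.2 ⟨by rw [card_insert_of_notMem hvS, hcard],
      insert_subset (hχ.subset hv) hSV, isIndepSet_insert_of_forall_not_adj hS hnadj⟩,
      v, mem_inter.2 ⟨mem_insert_self v S, hv⟩⟩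
  · rintro ⟨S, v⟩ hx ⟨S', v'⟩ hx' h
    obtain ⟨⟨-, -, hS⟩, hv, hvS, hnadj⟩ := hfacts S v hx
    obtain ⟨-, hv', hvS', -⟩ := hfacts S' v' hx'
    dsimp only at h
    have hvv' : v' = v := by
      have := hχ.inter_eq_singleton (isIndepSet_insert_of_forall_not_adj hS hnadj)
        (mem_inter.2 ⟨mem_insert_self v S, hv⟩)
      rw [h] at this
      exact mem_singleton.1 (this ▸ mem_inter.2 ⟨mem_insert_self v' S', hv'⟩)
    subst hvv'
    rw [← erase_insert hvS, h, erase_insert hvS']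
  · intro T hT
    obtain ⟨hTk, w, hw⟩ := mem_filter.1 hT
    obtain ⟨hcard, hTV, hT⟩ := mem_indepFinsets.1 hTk
    obtain ⟨hwT, hwK⟩ := mem_inter.1 hw
    have hcard' : #(T.erase w) = k := by rw [card_erase_of_mem hwT, hcard, Nat.add_sub_cancel]
    have hwE : ∀ z ∈ T.erase w, G.Adj w z → z ∈ K := fun z hz hadj =>
      absurd hadj (hT hwT (mem_of_mem_erase hz) (ne_of_mem_erase hz).symm)
    have hEK : ¬(T.erase w ∩ K).Nonempty := by
      rintro ⟨z, hz⟩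
      obtain ⟨hzT, hzK⟩ := mem_inter.1 hz
      have := hχ.inter_eq_singleton hT hw ▸ mem_inter.2 ⟨mem_of_mem_erase hzT, hzK⟩
      exact ne_of_mem_erase hzT (mem_singleton.1 this)
    exact ⟨(T.erase w, w), mem_filter.2 ⟨mem_product.2 ⟨mem_indepFinsets.2 ⟨hcard',
      (erase_subset w T).trans hTV, hT.mono (coe_subset.2 (erase_subset w T))⟩, hwK⟩,
      ⟨notMem_erase w T, hwE⟩, hEK⟩, insert_erase hwT⟩
  · rintro ⟨S, v⟩ hx
    obtain ⟨⟨-, hSV, hS⟩, hv, hvS, hnadj⟩ := hfacts S v hx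
    rw [hχ.sortedProd_insert (insert_subset (hχ.subset hv) hSV)
      (isIndepSet_insert_of_forall_not_adj hS hnadj) hvS,
      (hχ.commute_sortedProd (hχ.subset hv) hSV hnadj).eq]

lemma sum_addable [DecidableRel G.Adj] (hχ : IsSimplicialMode G g V K χ) (k : ℕ) :
    ∑ x ∈ indepFinsets G V k ×ˢ K with IsAddable G K x.1 x.2, sortedProd g x.1 * g x.2
      = ∑ T ∈ indepFinsets G V (k + 1) with (T ∩ K).Nonempty, sortedProd g T := by
  rw [← sum_filter_add_sum_filter_not _ fun x => (x.1 ∩ K).Nonempty, filter_filter,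
    filter_filter, hχ.sum_addable_of_nonempty_eq_zero, zero_add,
    hχ.sum_addable_of_not_nonempty]

theorem charge_succ_mul_sub_mul_charge_succ [DecidableRel G.Adj]
    (hχ : IsSimplicialMode G g V K χ) (k : ℕ) :
    charge G V g (k + 1) * χ - χ * charge G V g (k + 1)
      = charge G V g k * ((∑ v ∈ K, g v) * χ)
        + ((∑ v ∈ K, g v) * χ) * charge G V g k := by
  have hlhs : charge G V g (k + 1) * χ - χ * charge G V g (k + 1)
      = (∑ T ∈ indepFinsets G V (k + 1) with (T ∩ K).Nonempty,
          (sortedProd g T + sortedProd g T)) * χ := by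
    rw [charge, sum_mul, sum_mul, mul_sum, ← sum_sub_distrib, sum_filter]
    refine sum_congr rfl fun T hT => ?_
    obtain ⟨-, hTV, hT⟩ := mem_indepFinsets.1 hT
    rw [hχ.sortedProd_mul_sub_mul_sortedProd hTV hT, add_mul]
  have hrhs : charge G V g k * ((∑ v ∈ K, g v) * χ)
        + ((∑ v ∈ K, g v) * χ) * charge G V g k
      = ∑ x ∈ indepFinsets G V k ×ˢ K with IsAddable G K x.1 x.2,
          (sortedProd g x.1 * g x.2 + sortedProd g x.1 * g x.2) * χ := by
    rw [charge, sum_filter, sum_product, sum_mul, mul_sum, ← sum_add_distrib]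
    refine sum_congr rfl fun S hS => ?_
    obtain ⟨-, hSV, hS⟩ := mem_indepFinsets.1 hS
    calc sortedProd g S * ((∑ v ∈ K, g v) * χ) + (∑ v ∈ K, g v) * χ * sortedProd g S
        = ∑ v ∈ K,
            (sortedProd g S * g v + (-1 : ℤ) ^ #(S ∩ K) • (g v * sortedProd g S)) * χ := by
          simp only [mul_assoc, hχ.mode_mul_sortedProd hSV hS, add_mul, sum_add_distrib, sum_mul,
            mul_sum, smul_mul_assoc, mul_smul_comm]
      _ = _ := sum_congr rfl fun v hv => by
          rw [hχ.sortedProd_mul_add_neg_one_pow_smul hv hSV hS, ite_zero_mul]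
  rw [hlhs, hrhs, ← sum_mul, sum_add_distrib, sum_add_distrib, hχ.sum_addable]

end IsSimplicialMode

end SimplicialMode

section FrustrationGraph

lemma adj_comm {v w : ℕ} : Adj v w ↔ Adj w v := by
  unfold Adj
  split_ifs <;> simp only [abs_sub_comm]

lemma not_adj_self (v : ℕ) : ¬Adj v v := by
  unfold Adj
  split_ifs <;> simp

def frustrationGraph : SimpleGraph ℕ where
  Adj := Adj
  symm := ⟨fun _ _ => adj_comm.1⟩
  loopless := ⟨not_adj_self⟩

instance : DecidableRel frustrationGraph.Adj := fun v w => by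
  unfold frustrationGraph Adj MixedRel
  infer_instance

@[simp]
lemma frustrationGraph_adj {v w : ℕ} : frustrationGraph.Adj v w ↔ Adj v w := Iff.rfl

@[simp]
lemma adj_two_mul_two_mul {i j : ℕ} :
    Adj (2 * i) (2 * j) ↔ i ≠ j ∧ i ≤ j + 2 ∧ j ≤ i + 2 := by
  simp only [Adj, Nat.mul_mod_right, Nat.mul_div_cancel_left _ two_pos, if_true,
    Int.abs_eq_natAbs]
  omega

@[simp]
lemma adj_two_mul_two_mul_add_one {i m : ℕ} : Adj (2 * i) (2 * m + 1) ↔ MixedRel m i := by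
  simp [Adj, Nat.mul_add_div]

@[simp]
lemma adj_two_mul_add_one_two_mul {m i : ℕ} : Adj (2 * m + 1) (2 * i) ↔ MixedRel m i := by
  rw [adj_comm, adj_two_mul_two_mul_add_one]

@[simp]
lemma adj_two_mul_add_one_two_mul_add_one {m m' : ℕ} :
    Adj (2 * m + 1) (2 * m' + 1) ↔ m = m' + 1 ∨ m' = m + 1 := by
  simp only [Adj, Nat.mul_add_mod_self_left, Nat.mod_succ, one_ne_zero, if_false,
    Nat.mul_add_div two_pos, Nat.reduceDiv, add_zero, Int.abs_eq_natAbs]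
  omega

def vertices (n : ℕ) : Finset ℕ :=
  (Icc 1 n).image (2 * ·) ∪ (range (n / 2 + 1)).image (2 * · + 1)

lemma mem_vertices {n v : ℕ} :
    v ∈ vertices n ↔
      (∃ i, (1 ≤ i ∧ i ≤ n) ∧ 2 * i = v) ∨ ∃ m, m < n / 2 + 1 ∧ 2 * m + 1 = v := by
  simp [vertices]

@[simp]
lemma two_mul_mem_vertices {n i : ℕ} : 2 * i ∈ vertices n ↔ 1 ≤ i ∧ i ≤ n := by
  rw [mem_vertices]
  constructor
  · rintro (⟨j, hj, hji⟩ | ⟨m, -, hm⟩) <;> omega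
  · exact fun hi => .inl ⟨i, hi, rfl⟩

@[simp]
lemma two_mul_add_one_mem_vertices {n m : ℕ} : 2 * m + 1 ∈ vertices n ↔ m ≤ n / 2 := by
  rw [mem_vertices]
  constructor
  · rintro (⟨j, -, hj⟩ | ⟨m', hm', hm⟩) <;> omega
  · exact fun hm => .inr ⟨m, by omega, rfl⟩

lemma mem_vertices_iff_memG {n v : ℕ} : v ∈ vertices n ↔ memG n v := by
  rw [mem_vertices, memG]
  split_ifs with hv <;> constructor
  · rintro (⟨i, hi, rfl⟩ | ⟨m, hm, rfl⟩) <;> omega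
  · exact fun hv' => .inl ⟨v / 2, by omega, by omega⟩
  · rintro (⟨i, hi, rfl⟩ | ⟨m, hm, rfl⟩) <;> omega
  · exact fun hv' => .inr ⟨v / 2, by omega, by omega⟩

/-- The codes of `h_n` for odd `n`, and of `h_{n-1}`, `h_n`, `ħ_{n+1}` for even `n`. -/
def rightClique (n : ℕ) : Finset ℕ :=
  if n % 2 = 1 then {2 * n} else {2 * (n - 1), 2 * n, 2 * (n / 2) + 1}

lemma mem_rightClique {n v : ℕ} : v ∈ rightClique n ↔ n % 2 = 1 ∧ v = 2 * n ∨
    n % 2 = 0 ∧ (v = 2 * (n - 1) ∨ v = 2 * n ∨ v = 2 * (n / 2) + 1) := by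
  unfold rightClique
  split_ifs <;> simp <;> omega

lemma vertices_subset_range (n : ℕ) : vertices n ⊆ range (2 * n + 2) := fun v hv => by
  rw [mem_vertices] at hv
  rw [mem_range]
  rcases hv with ⟨i, hi, rfl⟩ | ⟨m, hm, rfl⟩ <;> omega

lemma indepSets_eq_indepFinsets (n k : ℕ) :
    indepSets n k = indepFinsets frustrationGraph (vertices n) k := by
  ext S
  simp only [indepSets, mem_filter, mem_powerset, ← mem_vertices_iff_memG, mem_indepFinsets]
  exact ⟨fun ⟨_, hk, hV, hS⟩ => ⟨hk, hV, fun v hv w hw => hS v hv w hw⟩,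
    fun ⟨hk, hV, hS⟩ =>
      ⟨hV.trans (vertices_subset_range n), hk, hV, fun v hv w hw => hS hv hw⟩⟩

lemma card_vertices_lt (n : ℕ) : #(vertices n) < 2 * n + 3 := by
  have := card_le_card (vertices_subset_range n)
  rw [card_range] at this
  omega

@[simp]
lemma gen_two_mul {R : Type*} (h hb : ℤ → R) (i : ℕ) : gen h hb (2 * i) = h i := by
  simp [gen]

@[simp]
lemma gen_two_mul_add_one {R : Type*} (h hb : ℤ → R) (m : ℕ) :
    gen h hb (2 * m + 1) = hb m := by
  simp [gen, Nat.mul_add_div]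

end FrustrationGraph

section Generators

variable {R : Type*} [Ring R] {n : ℕ} {h hb : ℤ → R} {b bb : ℤ → ℂ} {χ : R}

lemma FFDHyp.gen_anticomm [Algebra ℂ R] (hyp : FFDHyp n h hb b bb) {v w : ℕ}
    (hv : v ∈ vertices n) (hw : w ∈ vertices n) (hadj : Adj v w) :
    gen h hb v * gen h hb w = -(gen h hb w * gen h hb v) := by
  rw [mem_vertices] at hv hw
  rcases hv with ⟨i, hi, rfl⟩ | ⟨m, hm, rfl⟩ <;>
    rcases hw with ⟨j, hj, rfl⟩ | ⟨m', hm', rfl⟩ <;>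
    simp only [adj_two_mul_two_mul, adj_two_mul_two_mul_add_one, adj_two_mul_add_one_two_mul,
      adj_two_mul_add_one_two_mul_add_one, gen_two_mul, gen_two_mul_add_one] at hadj ⊢
  · exact hyp.hanti i j (by omega) (by omega) (by omega) (by omega)
      (by rw [Int.abs_eq_natAbs]; omega) (by rw [Int.abs_eq_natAbs]; omega)
  · exact (neg_eq_iff_eq_neg.2 (hyp.hbanti m' i (by omega) (by omega) (by omega) (by omega)
      hadj)).symm
  · exact hyp.hbanti m j (by omega) (by omega) (by omega) (by omega) hadj
  · exact hyp.hbbanti m m' (by omega) (by omega) (by omega) (by omega)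
      (by rw [Int.abs_eq_natAbs]; omega)

lemma FFDHyp.gen_commute [Algebra ℂ R] (hyp : FFDHyp n h hb b bb) {v w : ℕ}
    (hv : v ∈ vertices n) (hw : w ∈ vertices n) (hadj : ¬Adj v w) :
    Commute (gen h hb v) (gen h hb w) := by
  rcases eq_or_ne v w with rfl | hne
  · exact Commute.refl _
  rw [mem_vertices] at hv hw
  rcases hv with ⟨i, hi, rfl⟩ | ⟨m, hm, rfl⟩ <;>
    rcases hw with ⟨j, hj, rfl⟩ | ⟨m', hm', rfl⟩ <;>
    simp only [adj_two_mul_two_mul, adj_two_mul_two_mul_add_one, adj_two_mul_add_one_two_mul,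
      adj_two_mul_add_one_two_mul_add_one, gen_two_mul, gen_two_mul_add_one] at hadj ⊢
  · exact hyp.hcomm i j (by omega) (by omega) (by omega) (by omega)
      (by rw [Int.abs_eq_natAbs]; omega)
  · exact (hyp.hbcomm m' i (by omega) (by omega) (by omega) (by omega) hadj).symm
  · exact hyp.hbcomm m j (by omega) (by omega) (by omega) (by omega) hadj
  · exact hyp.hbbcomm m m' (by omega) (by omega) (by omega) (by omega) (by omega)
      (by rw [Int.abs_eq_natAbs]; omega)

lemma rightClique_subset (hn : 4 ≤ n) : rightClique n ⊆ vertices n := fun v hv => by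
  rw [mem_rightClique] at hv
  rcases hv with ⟨-, rfl⟩ | ⟨-, rfl | rfl | rfl⟩ <;> simp <;> omega

lemma isClique_rightClique (hn : 4 ≤ n) :
    frustrationGraph.IsClique (rightClique n : Set ℕ) := by
  intro v hv w hw hne
  simp only [mem_coe, mem_rightClique] at hv hw
  rcases hv with ⟨-, rfl⟩ | ⟨-, rfl | rfl | rfl⟩ <;>
    rcases hw with ⟨-, rfl⟩ | ⟨-, rfl | rfl | rfl⟩ <;>
    simp only [frustrationGraph_adj, adj_two_mul_two_mul, adj_two_mul_two_mul_add_one,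
      adj_two_mul_add_one_two_mul, adj_two_mul_add_one_two_mul_add_one, MixedRel] <;> omega

lemma rightClique_simplicial (hn : 4 ≤ n) : ∀ v ∈ rightClique n, frustrationGraph.IsClique
    {w | w ∈ vertices n ∧ w ∉ rightClique n ∧ frustrationGraph.Adj v w} := by
  intro v hv x ⟨hx, hxK, hvx⟩ y ⟨hy, hyK, hvy⟩ hxy
  rw [mem_rightClique] at hv hxK hyK
  rw [mem_vertices] at hx hy
  rcases hv with ⟨hp, rfl⟩ | ⟨hp, rfl | rfl | rfl⟩ <;>
    rcases hx with ⟨i, hi, rfl⟩ | ⟨m, hm, rfl⟩ <;>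
    rcases hy with ⟨j, hj, rfl⟩ | ⟨m', hm', rfl⟩ <;>
    simp only [frustrationGraph_adj, adj_two_mul_two_mul, adj_two_mul_two_mul_add_one,
      adj_two_mul_add_one_two_mul, adj_two_mul_add_one_two_mul_add_one, MixedRel] at hvx hvy ⊢ <;>
    omega

lemma EdgeMode.anticomm_gen_of_mem_rightClique (hn : 4 ≤ n) (hχ : EdgeMode n h hb χ) :
    ∀ v ∈ rightClique n, χ * gen h hb v = -(gen h hb v * χ) := by
  intro v hv
  rw [mem_rightClique] at hv
  rcases hv with ⟨hp, rfl⟩ | ⟨hp, rfl | rfl | rfl⟩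
  · simpa using (hχ.odd (by omega)).1
  · rw [gen_two_mul, Nat.cast_sub (by omega), Nat.cast_one]
    exact (hχ.even (by omega)).1
  · simpa using (hχ.even (by omega)).2.1
  · rw [gen_two_mul_add_one, show ((n / 2 : ℕ) : ℤ) = n / 2 by omega]
    exact (hχ.even (by omega)).2.2.1

lemma EdgeMode.commute_gen_of_notMem_rightClique (hχ : EdgeMode n h hb χ) :
    ∀ v ∈ vertices n, v ∉ rightClique n → Commute χ (gen h hb v) := by
  intro v hv hvK
  rw [mem_rightClique] at hvK
  rw [mem_vertices] at hv
  rcases Nat.mod_two_eq_zero_or_one n with hp | hp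
  · obtain ⟨-, -, -, hl, hm⟩ := hχ.even (by omega)
    rcases hv with ⟨i, hi, rfl⟩ | ⟨m, hm', rfl⟩
    · rw [gen_two_mul]
      exact hl i (by omega) (by omega)
    · rw [gen_two_mul_add_one]
      exact hm m (by omega) (by omega)
  · obtain ⟨-, hl, hm⟩ := hχ.odd (by omega)
    rcases hv with ⟨i, hi, rfl⟩ | ⟨m, hm', rfl⟩
    · rw [gen_two_mul]
      exact hl i (by omega) (by omega)
    · rw [gen_two_mul_add_one]
      exact hm m (by omega) (by omega)

lemma isSimplicialMode_rightClique [Algebra ℂ R] (hn : 4 ≤ n) (hyp : FFDHyp n h hb b bb)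
    (hχ : EdgeMode n h hb χ) :
    IsSimplicialMode frustrationGraph (gen h hb) (vertices n) (rightClique n) χ where
  anticomm _ hv _ hw := hyp.gen_anticomm hv hw
  commute _ hv _ hw := hyp.gen_commute hv hw
  subset := rightClique_subset hn
  isClique := isClique_rightClique hn
  simplicial := rightClique_simplicial hn
  anticomm_mode := hχ.anticomm_gen_of_mem_rightClique hn
  commute_mode := hχ.commute_gen_of_notMem_rightClique

lemma T_eq_sum [Algebra ℂ R] (hn : 0 < n) (u : ℂ) : T h hb n u
    = ∑ k ∈ range (2 * n + 3),
        (-u) ^ k • charge frustrationGraph (vertices n) (gen h hb) k := by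
  rw [T, if_neg (by omega), Int.toNat_natCast]
  refine sum_congr rfl fun k _ => ?_
  rw [Q, if_neg (by omega), if_neg (by omega), Int.toNat_natCast, Int.toNat_natCast,
    indepSets_eq_indepFinsets]
  rfl

lemma SEdge_eq_sum (hn : 4 ≤ n) : SEdge n h hb = ∑ v ∈ rightClique n, gen h hb v := by
  unfold SEdge rightClique
  rcases Nat.mod_two_eq_zero_or_one n with hp | hp
  · rw [if_neg (by omega), if_neg (by omega), sum_insert (by simp; omega),
      sum_insert (by simp; omega), sum_singleton, gen_two_mul, gen_two_mul, gen_two_mul_add_one,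
      Nat.cast_sub (by omega), Nat.cast_one, show ((n / 2 : ℕ) : ℤ) = n / 2 by omega, add_assoc]
  · rw [if_pos (by omega), if_pos hp, sum_singleton, gen_two_mul]

end Generators

theorem master_relation_general
    {A : Type*} [Ring A] [Algebra ℂ A]
    (M : ℤ) (hM : 4 ≤ M) (h hb : ℤ → A) (b bb : ℤ → ℂ)
    (hyp : FFDHyp M h hb b bb)
    (χ : A) (hχ : EdgeMode M h hb χ) :
    ∀ u : ℂ,
      T h hb M u * (χ + u • (SEdge M h hb * χ))
        = (χ - u • (SEdge M h hb * χ)) * T h hb M u := by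
  intro u
  lift M to ℕ using (by omega)
  have hmode := isSimplicialMode_rightClique (by omega) hyp hχ
  rw [T_eq_sum (by omega), SEdge_eq_sum (by omega)]
  exact sum_pow_smul_mul_add_smul (charge_zero _) (charge_eq_zero _ (card_vertices_lt M))
    hmode.charge_succ_mul_sub_mul_charge_succ u

/-- The master relation: for every `u ∈ ℂ`,
`T_M(u) (χ + u 𝕊 χ) = (χ - u 𝕊 χ) T_M(u)`. -/
theorem master_relation
    {A : Type*} [Ring A] [Algebra ℂ A]
    (M : ℤ) (hM : 4 ≤ M) (h hb : ℤ → A) (b bb : ℤ → ℂ)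
    (hyp : FFDHyp M h hb b bb) (hac : ACRel M h hb)
    (χ : A) (hχ : EdgeMode M h hb χ) :
    ∀ u : ℂ,
      T h hb M u * (χ + u • (SEdge M h hb * χ))
        = (χ - u • (SEdge M h hb * χ)) * T h hb M u :=
  master_relation_general M hM h hb b bb hyp χ hχ

end FFD
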